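/- Let V be a finite nonempty set and H a real inner product space. Let A : V → V → ℝ be symmetric, nonnegative, row-stochastic; define φ(x) = (1/2) ∑_{i,j} A i j ‖x i − x j‖², G(x) i = 2 ∑_j A i j (x i − x j), and use the ℓ² norm on V → H. Fix ε ∈ (0, 1/2), C ≥ 0, step sizes α_k ≥ 0 with ∑_{k=0}^∞ α_k² < ∞, and directions g^{(k)} : V → H with ‖g^{(k)}‖ ≤ C/√|V| for all k. Define the iteration x^{(k+1)} = (x^{(k)} − ε·G(x^{(k)})) + α_k · g^{(k)} from any initial x^{(0)}. Then (ε/2)(1 − 2ε) · ∑_{k=0}^∞ ‖G(x^{(k)})‖² ≤ φ(x^{(0)}) + (C²/|V|) · ( (1 + 16ε²)/(ε(1 − 2ε)) + 2 ) · ∑_{k=0}^∞ α_k²; in particular the series ∑_k ‖G(x^{(k)})‖² converges and G(x^{(k)}) → 0 as k → ∞. -/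

import Mathlib

/-!
With respect to the `ℓ²` inner product on `V → H`, `G` is the gradient of the quadratic form `φ`:
`φ (y + d) = φ y + ⟪G y, d⟫ + φ d` by symmetry of `A`, and `φ d ≤ 2 ‖d‖²` because `A` is doubly
stochastic, so `φ` satisfies the descent inequality with `L = 4`. For a gradient step of size `ε`
perturbed by `e = α • g`, Young's inequality absorbs the cross term `⟪G y, e⟫` into half of the
decrease `ε (1 - 2ε) ‖G y‖²`, leaving
`φ (x (k+1)) ≤ φ (x k) - (ε/2)(1 - 2ε) ‖G (x k)‖² + K α_k²` with `K` proportional to `C²/|V|`.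
Summing over `k` and using `φ ≥ 0` bounds the partial sums of `‖G (x k)‖²`.
-/

open Finset Filter Topology

section Descent

variable {E : Type*} [NormedAddCommGroup E] [InnerProductSpace ℝ E]

lemma mul_real_inner_le_young {t δ : ℝ} (hδ : 0 < δ) (x y : E) :
    t * inner ℝ x y ≤ δ / 2 * ‖x‖ ^ 2 + t ^ 2 / (2 * δ) * ‖y‖ ^ 2 := by
  have h := sq_nonneg ‖δ • x - t • y‖
  rw [norm_sub_sq_real, norm_smul, norm_smul, real_inner_smul_left, real_inner_smul_right,
    Real.norm_eq_abs, Real.norm_eq_abs, mul_pow, mul_pow, sq_abs, sq_abs] at h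
  rw [div_mul_eq_mul_div, div_mul_eq_mul_div, div_add_div _ _ two_ne_zero (by positivity),
    le_div_iff₀ (by positivity)]
  nlinarith

lemma perturbed_gradient_step_le {f : E → ℝ} {grad : E → E} {L ε : ℝ}
    (hf : ∀ y d, f (y + d) ≤ f y + inner ℝ (grad y) d + L / 2 * ‖d‖ ^ 2)
    (hε : 0 < ε) (hεL : L * ε < 2) (y e : E) :
    f (y - ε • grad y + e) ≤ f y - ε / 2 * (1 - L / 2 * ε) * ‖grad y‖ ^ 2
      + ((1 + L ^ 2 * ε ^ 2) / (ε * (1 - L / 2 * ε)) + L / 2) * ‖e‖ ^ 2 := by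
  have hδ : 0 < ε * (1 - L / 2 * ε) := mul_pos hε (by linarith)
  have hyoung := mul_real_inner_le_young (t := 1 - L * ε) hδ (grad y) e
  have hcoeff : (1 - L * ε) ^ 2 / (2 * (ε * (1 - L / 2 * ε)))
      ≤ (1 + L ^ 2 * ε ^ 2) / (ε * (1 - L / 2 * ε)) := by
    rw [div_le_div_iff₀ (by positivity) hδ]
    nlinarith [sq_nonneg (1 + L * ε)]
  have hinner : inner ℝ (grad y) (e - ε • grad y) = inner ℝ (grad y) e - ε * ‖grad y‖ ^ 2 := by
    rw [inner_sub_right, real_inner_smul_right, real_inner_self_eq_norm_sq]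
  have hnorm : ‖e - ε • grad y‖ ^ 2
      = ‖e‖ ^ 2 - 2 * ε * inner ℝ (grad y) e + ε ^ 2 * ‖grad y‖ ^ 2 := by
    rw [norm_sub_sq_real, real_inner_smul_right, real_inner_comm, norm_smul, Real.norm_eq_abs,
      mul_pow, sq_abs]
    ring
  have hstep := hf y (e - ε • grad y)
  rw [hinner, hnorm] at hstep
  rw [show y - ε • grad y + e = y + (e - ε • grad y) by abel]
  linear_combination hstep + hyoung + mul_le_mul_of_nonneg_right hcoeff (sq_nonneg ‖e‖)

end Descent

lemma summable_and_tsum_le_of_le_sub_add {u v w : ℕ → ℝ} (hu : ∀ k, 0 ≤ u k)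
    (hv : ∀ k, 0 ≤ v k) (hw : ∀ k, 0 ≤ w k) (hw_sum : Summable w)
    (h : ∀ k, u (k + 1) ≤ u k - v k + w k) :
    Summable v ∧ ∑' k, v k ≤ u 0 + ∑' k, w k := by
  have htelescope : ∀ n, u n + ∑ k ∈ range n, v k ≤ u 0 + ∑ k ∈ range n, w k := by
    intro n
    induction n with
    | zero => simp
    | succ n ih =>
      rw [sum_range_succ, sum_range_succ]
      linarith [h n]
  have hpartial : ∀ n, ∑ k ∈ range n, v k ≤ u 0 + ∑' k, w k := fun n => by
    linarith [htelescope n, hu n, hw_sum.sum_le_tsum (range n) (fun k _ => hw k)]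
  have hv_sum : Summable v := summable_of_sum_range_le hv hpartial
  exact ⟨hv_sum, hv_sum.tsum_le_of_sum_range_le hpartial⟩

lemma tendsto_zero_of_summable_sum_norm_sq {V H : Type*} [Fintype V] [SeminormedAddCommGroup H]
    {y : ℕ → V → H} (h : Summable fun k => ∑ i, ‖y k i‖ ^ 2) : Tendsto y atTop (𝓝 0) := by
  rw [tendsto_pi_nhds]
  intro i
  have hi : Summable fun k => ‖y k i‖ ^ 2 :=
    h.of_nonneg_of_le (fun k => sq_nonneg _) fun k =>
      single_le_sum (f := fun j => ‖y k j‖ ^ 2) (fun j _ => sq_nonneg _) (mem_univ i)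
  rw [Pi.zero_apply, tendsto_zero_iff_norm_tendsto_zero]
  simpa [Real.sqrt_sq (norm_nonneg _)] using hi.tendsto_atTop_zero.sqrt

noncomputable section Consensus

variable {V H : Type*} [Fintype V] [NormedAddCommGroup H]

def consensusEnergy (A : V → V → ℝ) (x : V → H) : ℝ :=
  (1 / 2 : ℝ) * ∑ i, ∑ j, A i j * ‖x i - x j‖ ^ 2

variable {A : V → V → ℝ}

lemma consensusEnergy_nonneg (hA_nonneg : ∀ i j, 0 ≤ A i j) (x : V → H) :
    0 ≤ consensusEnergy A x :=
  mul_nonneg (by norm_num) <| sum_nonneg fun i _ => sum_nonneg fun j _ =>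
    mul_nonneg (hA_nonneg i j) (sq_nonneg _)

lemma consensusEnergy_le_two_mul_sum_norm_sq (hA_symm : ∀ i j, A i j = A j i)
    (hA_nonneg : ∀ i j, 0 ≤ A i j) (hA_row : ∀ i, ∑ j, A i j = 1) (d : V → H) :
    consensusEnergy A d ≤ 2 * ∑ i, ‖d i‖ ^ 2 := by
  have hA_col : ∀ j, ∑ i, A i j = 1 := fun j => by simp only [hA_symm _ j, hA_row]
  have hterm : ∀ i j,
      A i j * ‖d i - d j‖ ^ 2 ≤ A i j * (2 * ‖d i‖ ^ 2) + A i j * (2 * ‖d j‖ ^ 2) := fun i j => by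
      rw [← mul_add]
      refine mul_le_mul_of_nonneg_left ?_ (hA_nonneg i j)
      nlinarith [norm_sub_le (d i) (d j), norm_nonneg (d i - d j), sq_nonneg (‖d i‖ - ‖d j‖)]
  calc consensusEnergy A d
      ≤ 1 / 2 * ∑ i, ∑ j, (A i j * (2 * ‖d i‖ ^ 2) + A i j * (2 * ‖d j‖ ^ 2)) := by
        unfold consensusEnergy
        gcongr with i _ j _
        exact hterm i j
    _ = 2 * ∑ i, ‖d i‖ ^ 2 := by
        simp only [sum_add_distrib]
        rw [sum_comm (f := fun i j => A i j * (2 * ‖d j‖ ^ 2))]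
        simp only [← sum_mul, hA_row, hA_col, one_mul, ← mul_sum]
        ring

variable [InnerProductSpace ℝ H]

def consensusGradient (A : V → V → ℝ) (x : V → H) : V → H :=
  fun i => (2 : ℝ) • ∑ j, A i j • (x i - x j)

lemma sum_sum_mul_inner_sub_eq_sum_inner_consensusGradient (hA_symm : ∀ i j, A i j = A j i)
    (y d : V → H) :
    ∑ i, ∑ j, A i j * inner ℝ (y i - y j) (d i - d j)
      = ∑ i, inner ℝ (consensusGradient A y i) (d i) := by
  have hswap : ∑ i, ∑ j, A i j * inner ℝ (y i - y j) (d j)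
      = -∑ i, ∑ j, A i j * inner ℝ (y i - y j) (d i) := by
    rw [sum_comm]
    simp only [← sum_neg_distrib]
    refine sum_congr rfl fun i _ => sum_congr rfl fun j _ => ?_
    rw [hA_symm j i, ← neg_sub, inner_neg_left, mul_neg]
  simp only [consensusGradient, inner_sub_right, mul_sub, sum_sub_distrib, hswap,
    real_inner_smul_left, sum_inner, ← mul_sum]
  ring

lemma consensusEnergy_add (hA_symm : ∀ i j, A i j = A j i) (y d : V → H) :
    consensusEnergy A (y + d)
      = consensusEnergy A y + ∑ i, inner ℝ (consensusGradient A y i) (d i)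
        + consensusEnergy A d := by
  have hexpand : ∀ i j, A i j * ‖(y + d) i - (y + d) j‖ ^ 2
      = A i j * ‖y i - y j‖ ^ 2 + 2 * (A i j * inner ℝ (y i - y j) (d i - d j))
        + A i j * ‖d i - d j‖ ^ 2 := fun i j => by
    rw [Pi.add_apply, Pi.add_apply, add_sub_add_comm, norm_add_sq_real]
    ring
  simp only [consensusEnergy, hexpand, sum_add_distrib, ← mul_sum,
    sum_sum_mul_inner_sub_eq_sum_inner_consensusGradient hA_symm]
  ring

lemma consensusEnergy_sub_smul_gradient_add_le (hA_symm : ∀ i j, A i j = A j i)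
    (hA_nonneg : ∀ i j, 0 ≤ A i j) (hA_row : ∀ i, ∑ j, A i j = 1) {ε : ℝ} (hε : 0 < ε)
    (hε' : ε < 1 / 2) (y e : V → H) :
    consensusEnergy A (y - ε • consensusGradient A y + e)
      ≤ consensusEnergy A y - ε / 2 * (1 - 2 * ε) * ∑ i, ‖consensusGradient A y i‖ ^ 2
        + ((1 + 16 * ε ^ 2) / (ε * (1 - 2 * ε)) + 2) * ∑ i, ‖e i‖ ^ 2 := by
  have hsmooth : ∀ y d : PiLp 2 (fun _ : V => H),
      consensusEnergy A (y + d).ofLp ≤ consensusEnergy A y.ofLp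
        + inner ℝ (WithLp.toLp 2 (consensusGradient A y.ofLp)) d + 4 / 2 * ‖d‖ ^ 2 := by
    intro y d
    rw [WithLp.ofLp_add, consensusEnergy_add hA_symm, PiLp.inner_apply, PiLp.norm_sq_eq_of_L2]
    linarith [consensusEnergy_le_two_mul_sum_norm_sq hA_symm hA_nonneg hA_row d.ofLp]
  have h := perturbed_gradient_step_le (E := PiLp 2 (fun _ : V => H))
    (f := fun z => consensusEnergy A z.ofLp)
    (grad := fun z => WithLp.toLp 2 (consensusGradient A z.ofLp)) (L := 4)
    hsmooth hε (by linarith) (WithLp.toLp 2 y) (WithLp.toLp 2 e)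
  simp only [PiLp.norm_sq_eq_of_L2, ← WithLp.toLp_smul, ← WithLp.toLp_sub,
    ← WithLp.toLp_add] at h
  convert h using 3 <;> norm_num

end Consensus

theorem consensus_gradient_vanishes_along_iterates_general
    {V H : Type*} [Fintype V]
    [NormedAddCommGroup H] [InnerProductSpace ℝ H]
    (A : V → V → ℝ) (hA_symm : ∀ i j, A i j = A j i)
    (hA_nonneg : ∀ i j, 0 ≤ A i j) (hA_row : ∀ i, ∑ j, A i j = 1)
    (φ : (V → H) → ℝ)
    (hφ : ∀ x, φ x = (1 / 2 : ℝ) * ∑ i, ∑ j, A i j * ‖x i - x j‖ ^ 2)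
    (G : (V → H) → V → H)
    (hG : ∀ x i, G x i = (2 : ℝ) • ∑ j, A i j • (x i - x j))
    (ε C : ℝ) (hε : 0 < ε) (hε' : ε < 1 / 2)
    (α : ℕ → ℝ) (hα_sq : Summable fun k => (α k) ^ 2)
    (g : ℕ → V → H)
    (hg : ∀ k, Real.sqrt (∑ i, ‖g k i‖ ^ 2) ≤ C / Real.sqrt (Fintype.card V))
    (x : ℕ → V → H)
    (hx : ∀ k, x (k + 1) = (x k - ε • G (x k)) + α k • g k) :
    (Summable fun k => ∑ i, ‖G (x k) i‖ ^ 2) ∧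
    ε / 2 * (1 - 2 * ε) * ∑' k, ∑ i, ‖G (x k) i‖ ^ 2
      ≤ φ (x 0)
        + C ^ 2 / Fintype.card V * ((1 + 16 * ε ^ 2) / (ε * (1 - 2 * ε)) + 2)
          * ∑' k, (α k) ^ 2 ∧
    Filter.Tendsto (fun k => G (x k)) Filter.atTop (nhds 0) := by
  obtain rfl : φ = consensusEnergy A := funext hφ
  obtain rfl : G = consensusGradient A := funext fun y => funext (hG y)
  set c := ε / 2 * (1 - 2 * ε)
  set M := (1 + 16 * ε ^ 2) / (ε * (1 - 2 * ε)) + 2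
  have hc : 0 < c := mul_pos (by positivity) (by linarith)
  have hM : 0 ≤ M := by have : 0 < ε * (1 - 2 * ε) := mul_pos hε (by linarith); positivity
  have hg_sq (k : ℕ) : ∑ i, ‖g k i‖ ^ 2 ≤ C ^ 2 / Fintype.card V := by
    have h := pow_le_pow_left₀ (Real.sqrt_nonneg _) (hg k) 2
    rwa [Real.sq_sqrt (sum_nonneg fun i _ => sq_nonneg _), div_pow,
      Real.sq_sqrt (Nat.cast_nonneg _)] at h
  have hstep (k : ℕ) : consensusEnergy A (x (k + 1)) ≤ consensusEnergy A (x k)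
      - c * ∑ i, ‖consensusGradient A (x k) i‖ ^ 2 + C ^ 2 / Fintype.card V * M * α k ^ 2 := by
    have h := consensusEnergy_sub_smul_gradient_add_le hA_symm hA_nonneg hA_row hε hε' (x k)
      (α k • g k)
    simp only [Pi.smul_apply, norm_smul, mul_pow, Real.norm_eq_abs, sq_abs, ← mul_sum] at h
    calc consensusEnergy A (x (k + 1))
        ≤ consensusEnergy A (x k) - c * ∑ i, ‖consensusGradient A (x k) i‖ ^ 2
          + M * (α k ^ 2 * ∑ i, ‖g k i‖ ^ 2) := hx k ▸ h
      _ ≤ _ := by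
        linarith [mul_le_mul_of_nonneg_left
          (mul_le_mul_of_nonneg_left (hg_sq k) (sq_nonneg (α k))) hM]
  obtain ⟨hsum, hle⟩ := summable_and_tsum_le_of_le_sub_add
    (v := fun k => c * ∑ i, ‖consensusGradient A (x k) i‖ ^ 2)
    (fun k => consensusEnergy_nonneg hA_nonneg (x k))
    (fun k => mul_nonneg hc.le (sum_nonneg fun i _ => sq_nonneg _))
    (fun k => by positivity) (hα_sq.mul_left _) hstep
  have hsum' := (summable_mul_left_iff hc.ne').mp hsum
  refine ⟨hsum', ?_, tendsto_zero_of_summable_sum_norm_sq hsum'⟩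
  rwa [tsum_mul_left, tsum_mul_left] at hle

/-- Key convergence estimate (Euclidean instance, `L = 4`) of Step 2 of the proof of
Theorem 1: along the iterates of Algorithm 1 with square-summable step sizes and bounded
local gradient directions, the sum `∑ₖ ‖G(x⁽ᵏ⁾)‖²` is finite and bounded by
`φ(x⁽⁰⁾)` plus a step-size term; in particular `G(x⁽ᵏ⁾) → 0`. -/
theorem consensus_gradient_vanishes_along_iterates
    {V H : Type*} [Fintype V] [Nonempty V]
    [NormedAddCommGroup H] [InnerProductSpace ℝ H]
    (A : V → V → ℝ) (hA_symm : ∀ i j, A i j = A j i)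
    (hA_nonneg : ∀ i j, 0 ≤ A i j) (hA_row : ∀ i, ∑ j, A i j = 1)
    (φ : (V → H) → ℝ)
    (hφ : ∀ x, φ x = (1 / 2 : ℝ) * ∑ i, ∑ j, A i j * ‖x i - x j‖ ^ 2)
    (G : (V → H) → V → H)
    (hG : ∀ x i, G x i = (2 : ℝ) • ∑ j, A i j • (x i - x j))
    (ε C : ℝ) (hε : 0 < ε) (hε' : ε < 1 / 2) (hC : 0 ≤ C)
    (α : ℕ → ℝ) (hα_nonneg : ∀ k, 0 ≤ α k) (hα_sq : Summable fun k => (α k) ^ 2)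
    (g : ℕ → V → H)
    (hg : ∀ k, Real.sqrt (∑ i, ‖g k i‖ ^ 2) ≤ C / Real.sqrt (Fintype.card V))
    (x : ℕ → V → H)
    (hx : ∀ k, x (k + 1) = (x k - ε • G (x k)) + α k • g k) :
    (Summable fun k => ∑ i, ‖G (x k) i‖ ^ 2) ∧
    ε / 2 * (1 - 2 * ε) * ∑' k, ∑ i, ‖G (x k) i‖ ^ 2
      ≤ φ (x 0)
        + C ^ 2 / Fintype.card V * ((1 + 16 * ε ^ 2) / (ε * (1 - 2 * ε)) + 2)
          * ∑' k, (α k) ^ 2 ∧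
    Filter.Tendsto (fun k => G (x k)) Filter.atTop (nhds 0) :=
  consensus_gradient_vanishes_along_iterates_general A hA_symm hA_nonneg hA_row φ hφ G hG ε C hε hε'
    α hα_sq g hg x hx
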